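/- arXiv:1710.02716 — 5 statements merged into one kernel-verified Lean document; each statement's English description precedes it below -/
import Mathlib

section
/- Let α > 1/2 be a constant and let n = 2m be even. Let G be a graph on vertex set [n] with minimum degree at least αn, fix an edge e = {x, y} of K_n, and let M be a uniformly random perfect matching of K_n conditioned to contain e. Then there exists a constant c > 0 (depending only on α) such that for all sufficiently large n, the probability that the degree of the vertex e in Π(G ∪ M) is at most (2α − 1)³ n / 2 is at most exp(−c(2α−1)⁶ n). -/
/-!
The degree of `s(x, y)` in `Π(G ∪ M)` is the number of edges of `M` inside the common
neighbourhood `S` of `x` and `y`, and `s = |S| ≥ βn` for `β = 2α - 1`. Let `a_k` be the number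
of perfect matchings through `s(x, y)` with exactly `k` edges inside `S`. Switching two edges
`{u, u'}`, `{v, v'}` with `u, v ∈ S` and `u', v' ∉ S` into `{u, v}`, `{u', v'}` is injective once
the image also records `u` and `u'`; double counting gives
`a_k (s - 2k)(s - 2k - 1) ≤ a_{k+1} · 2(k + 1)(n + 2k - 2s)`.
For `β ≤ 0.65` this makes `a_k ≤ (5/6) a_{k+1}` up to `k ≈ β³n/2 + β²n/25`, so the layers with
at most `β³n/2` edges carry at most a fraction `6 (5/6)^{β²n/25}` of all matchings. For
`β > 0.65` nothing is random: every perfect matching through `s(x, y)` has at least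
`s + 1 - n/2 > β³n/2` edges inside `S`.
-/

open Finset
open scoped Classical

/-- `M` is a perfect matching of the complete graph on `Fin n`. -/
def IsPerfMatching (n : ℕ) (M : Finset (Sym2 (Fin n))) : Prop :=
  (∀ e ∈ M, ¬ e.IsDiag) ∧ ∀ v : Fin n, ∃! e, e ∈ M ∧ v ∈ e

/-- The collection of all perfect matchings of the complete graph on `Fin n`. -/
noncomputable def matchings (n : ℕ) : Finset (Finset (Sym2 (Fin n))) :=
  Finset.univ.filter (IsPerfMatching n)

/-- Adjacency of the graph `Π(H)` on the matching `M`: two matching edges `e ≠ f`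
are adjacent when the subgraph of `H` induced by the four vertices of `e ∪ f` is `K₄`. -/
def PiAdj {n : ℕ} (H : SimpleGraph (Fin n)) (M : Finset (Sym2 (Fin n)))
    (e f : Sym2 (Fin n)) : Prop :=
  e ∈ M ∧ f ∈ M ∧ e ≠ f ∧
    ∀ u v : Fin n, (u ∈ e ∨ u ∈ f) → (v ∈ e ∨ v ∈ f) → u ≠ v → H.Adj u v

/-- The vertex matched to `v` in `M`; junk value `v` if `M` does not cover `v`. -/
noncomputable def partner {n : ℕ} (M : Finset (Sym2 (Fin n))) (v : Fin n) : Fin n :=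
  if h : ∃ w, s(v, w) ∈ M then h.choose else v

noncomputable def switch {n : ℕ} (M : Finset (Sym2 (Fin n))) (u v : Fin n) :
    Finset (Sym2 (Fin n)) :=
  insert s(u, v) (insert s(partner M u, partner M v)
    ((M.erase s(u, partner M u)).erase s(v, partner M v)))

theorem mem_switch {n : ℕ} {M : Finset (Sym2 (Fin n))} {u v : Fin n} {f : Sym2 (Fin n)} :
    f ∈ switch M u v ↔ f = s(u, v) ∨ f = s(partner M u, partner M v) ∨
      (f ∈ M ∧ f ≠ s(u, partner M u) ∧ f ≠ s(v, partner M v)) := by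
  simp only [switch, mem_insert, mem_erase]
  tauto

namespace IsPerfMatching

variable {n : ℕ} {M : Finset (Sym2 (Fin n))}

theorem of_cover (hdiag : ∀ e ∈ M, ¬ e.IsDiag) (hcover : ∀ v, ∃ e ∈ M, v ∈ e)
    (hdisj : ∀ e ∈ M, ∀ f ∈ M, ∀ v ∈ e, v ∈ f → e = f) : IsPerfMatching n M := by
  refine ⟨hdiag, fun v => ?_⟩
  obtain ⟨e, he, hve⟩ := hcover v
  exact ⟨e, ⟨he, hve⟩, fun f hf => hdisj f hf.1 e he v hf.2 hve⟩

variable (hM : IsPerfMatching n M)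
include hM

theorem eq_of_mem_of_mem {e f : Sym2 (Fin n)} {v : Fin n} (he : e ∈ M) (hf : f ∈ M)
    (hve : v ∈ e) (hvf : v ∈ f) : e = f :=
  (hM.2 v).unique ⟨he, hve⟩ ⟨hf, hvf⟩

theorem mk_partner_mem (v : Fin n) : s(v, partner M v) ∈ M := by
  obtain ⟨e, ⟨he, hve⟩, -⟩ := hM.2 v
  obtain ⟨w, rfl⟩ := Sym2.mem_iff_exists.1 hve |>.imp fun w h => h.symm
  have h : ∃ w, s(v, w) ∈ M := ⟨w, he⟩
  rw [partner, dif_pos h]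
  exact h.choose_spec

theorem partner_ne (v : Fin n) : partner M v ≠ v := fun h =>
  hM.1 _ (hM.mk_partner_mem v) (by rw [h]; exact Sym2.mk_isDiag_iff.2 rfl)

theorem eq_mk_partner_of_mem {f : Sym2 (Fin n)} {v : Fin n} (hf : f ∈ M) (hv : v ∈ f) :
    f = s(v, partner M v) :=
  hM.eq_of_mem_of_mem hf (hM.mk_partner_mem v) hv (Sym2.mem_mk_left _ _)

theorem partner_eq_of_mk_mem {v w : Fin n} (h : s(v, w) ∈ M) : partner M v = w := by
  have := hM.eq_mk_partner_of_mem h (Sym2.mem_mk_left v w)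
  rw [Sym2.congr_right] at this
  exact this.symm

theorem partner_partner (v : Fin n) : partner M (partner M v) = v :=
  hM.partner_eq_of_mk_mem (Sym2.eq_swap ▸ hM.mk_partner_mem v)

theorem partner_injective : Function.Injective (partner M) :=
  Function.LeftInverse.injective hM.partner_partner

theorem card_filter_partner_mem (S : Finset (Fin n)) :
    #{v ∈ S | partner M v ∈ S} = 2 * #(M ∩ S.sym2) := by
  rw [card_eq_sum_card_fiberwise (f := fun v => s(v, partner M v)) (t := M ∩ S.sym2),
    sum_const_nat (m := 2), mul_comm]
  · intro e he
    rw [mem_inter] at he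
    rw [← Sym2.card_toFinset_of_not_isDiag e (hM.1 e he.1)]
    congr 1
    ext v
    simp only [mem_filter, Sym2.mem_toFinset]
    constructor
    · rintro ⟨-, rfl⟩
      exact Sym2.mem_mk_left _ _
    · intro hv
      have he' := hM.eq_mk_partner_of_mem he.1 hv
      have hS := mem_sym2_iff.1 he.2
      exact ⟨⟨hS v hv, hS _ (he' ▸ Sym2.mem_mk_right _ _)⟩, he'.symm⟩
  · intro v hv
    rw [mem_coe, mem_filter] at hv
    exact mem_coe.2 <| mem_inter.2 ⟨hM.mk_partner_mem v, mk_mem_sym2_iff.2 hv⟩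

theorem card_filter_partner_notMem_add (S : Finset (Fin n)) :
    #{v ∈ S | partner M v ∉ S} + 2 * #(M ∩ S.sym2) = #S := by
  rw [← hM.card_filter_partner_mem, add_comm, card_filter_add_card_filter_not]

theorem card_filter_partner_notMem (S : Finset (Fin n)) :
    #{v ∈ S | partner M v ∉ S} = #{v ∈ Sᶜ | partner M v ∈ S} :=
  card_nbij (partner M) (fun v hv => by simp_all [hM.partner_partner])
    hM.partner_injective.injOn
    (fun v hv => ⟨partner M v, by simp_all [hM.partner_partner], hM.partner_partner v⟩)

theorem card_filter_compl_partner_notMem_add (S : Finset (Fin n)) :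
    #{v ∈ Sᶜ | partner M v ∉ S} + 2 * #S = n + 2 * #(M ∩ S.sym2) := by
  have hS := hM.card_filter_partner_notMem_add S
  have hSc := card_filter_add_card_filter_not (s := Sᶜ) (partner M · ∈ S)
  rw [card_compl, Fintype.card_fin] at hSc
  have := card_le_univ S
  rw [Fintype.card_fin] at this
  have h2 := hM.card_filter_partner_notMem S
  omega

theorem notMem_of_ne_mk_partner {g : Sym2 (Fin n)} (hg : g ∈ M) {u : Fin n}
    (hne : g ≠ s(u, partner M u)) : u ∉ g ∧ partner M u ∉ g := by
  refine ⟨fun h => hne (hM.eq_mk_partner_of_mem hg h), fun h => hne ?_⟩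
  rw [hM.eq_mk_partner_of_mem hg h, hM.partner_partner, Sym2.eq_swap]

theorem partner_notMem_of_notMem {e : Sym2 (Fin n)} (he : e ∈ M) {u : Fin n} (hu : u ∉ e) :
    partner M u ∉ e := fun h =>
  hu (hM.partner_partner u ▸ hM.eq_mk_partner_of_mem he h ▸ Sym2.mem_mk_right _ _)

theorem partner_ne_of_partner_ne {u v : Fin n} (hu : partner M u ≠ v) : partner M v ≠ u :=
  fun h => hu (h ▸ hM.partner_partner v)

variable {u v : Fin n} (huv : u ≠ v) (hu : partner M u ≠ v)
include huv hu

protected theorem switch : IsPerfMatching n (switch M u v) := by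
  have hv := hM.partner_ne_of_partner_ne hu
  have hpp : partner M u ≠ partner M v := hM.partner_injective.ne huv
  have hpu := hM.partner_ne u
  have hpv := hM.partner_ne v
  refine of_cover (fun e he => ?_) (fun w => ?_) (fun e he f hf w hwe hwf => ?_)
  · rcases mem_switch.1 he with rfl | rfl | ⟨he, -, -⟩
    · exact Sym2.mk_isDiag_iff.not.2 huv
    · exact Sym2.mk_isDiag_iff.not.2 hpp
    · exact hM.1 e he
  · by_cases hw : w = u ∨ w = v
    · exact ⟨s(u, v), mem_switch.2 (Or.inl rfl), Sym2.mem_iff.2 hw⟩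
    by_cases hw' : w = partner M u ∨ w = partner M v
    · exact ⟨_, mem_switch.2 (Or.inr (Or.inl rfl)), Sym2.mem_iff.2 hw'⟩
    refine ⟨s(w, partner M w), mem_switch.2 (Or.inr (Or.inr ⟨hM.mk_partner_mem w, ?_, ?_⟩)),
      Sym2.mem_mk_left _ _⟩ <;>
    · intro h
      have := h ▸ Sym2.mem_mk_left w (partner M w)
      simp only [Sym2.mem_iff] at this
      tauto
  · have hold : ∀ g ∈ M, g ≠ s(u, partner M u) → g ≠ s(v, partner M v) → w ∈ g →
        w ≠ u ∧ w ≠ partner M u ∧ w ≠ v ∧ w ≠ partner M v := by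
      intro g hg hgu hgv hwg
      have h1 := hM.notMem_of_ne_mk_partner hg hgu
      have h2 := hM.notMem_of_ne_mk_partner hg hgv
      refine ⟨?_, ?_, ?_, ?_⟩ <;> rintro rfl <;> tauto
    rcases mem_switch.1 he with rfl | rfl | ⟨he, heu, hev⟩ <;>
    rcases mem_switch.1 hf with rfl | rfl | ⟨hf, hfu, hfv⟩
    all_goals first
      | rfl
      | exact hM.eq_of_mem_of_mem he hf hwe hwf
      | (simp only [Sym2.mem_iff] at hwe hwf; grind)

theorem partner_switch_left : partner (switch M u v) u = v :=
  (hM.switch huv hu).partner_eq_of_mk_mem (mem_switch.2 (Or.inl rfl))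

theorem partner_switch_partner_left : partner (switch M u v) (partner M u) = partner M v :=
  (hM.switch huv hu).partner_eq_of_mk_mem (mem_switch.2 (Or.inr (Or.inl rfl)))

theorem switch_switch : switch (switch M u v) u (partner M u) = M := by
  have huv' : s(u, v) ∉ M := fun h => hu (hM.partner_eq_of_mk_mem h)
  have hpp' : s(partner M u, partner M v) ∉ M := fun h =>
    hM.partner_ne_of_partner_ne hu (by rw [← hM.partner_eq_of_mk_mem h, hM.partner_partner])
  ext f
  rw [mem_switch, hM.partner_switch_left huv hu, hM.partner_switch_partner_left huv hu,
    mem_switch]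
  constructor
  · rintro (rfl | rfl | ⟨rfl | rfl | ⟨hf, -⟩, h1, h2⟩)
    · exact hM.mk_partner_mem u
    · exact hM.mk_partner_mem v
    · exact absurd rfl h1
    · exact absurd rfl h2
    · exact hf
  · intro hf
    by_cases h1 : f = s(u, partner M u)
    · exact Or.inl h1
    by_cases h2 : f = s(v, partner M v)
    · exact Or.inr (Or.inl h2)
    exact Or.inr (Or.inr ⟨Or.inr (Or.inr ⟨hf, h1, h2⟩), fun h => huv' (h ▸ hf),
      fun h => hpp' (h ▸ hf)⟩)

theorem eq_of_switch_eq {M' : Finset (Sym2 (Fin n))} (hM' : IsPerfMatching n M') {v' : Fin n}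
    (huv' : u ≠ v') (hu' : partner M' u ≠ v') (h : switch M u v = switch M' u v')
    (hp : partner M u = partner M' u) : M = M' ∧ v = v' :=
  ⟨by rw [← hM.switch_switch huv hu, h, hp, hM'.switch_switch huv' hu'],
    by rw [← hM.partner_switch_left huv hu, h, hM'.partner_switch_left huv' hu']⟩

end IsPerfMatching

noncomputable def matchingsThrough {n : ℕ} (x y : Fin n) : Finset (Finset (Sym2 (Fin n))) :=
  (matchings n).filter (s(x, y) ∈ ·)

noncomputable def matchingLayer {n : ℕ} (x y : Fin n) (S : Finset (Fin n)) (k : ℕ) :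
    Finset (Finset (Sym2 (Fin n))) :=
  (matchingsThrough x y).filter fun M => #(M ∩ S.sym2) = k

section Switching

variable {n : ℕ} {x y : Fin n} {S : Finset (Fin n)} {M : Finset (Sym2 (Fin n))}

theorem mem_matchingsThrough :
    M ∈ matchingsThrough x y ↔ IsPerfMatching n M ∧ s(x, y) ∈ M := by
  simp [matchingsThrough, matchings]

theorem mem_matchingLayer {k : ℕ} :
    M ∈ matchingLayer x y S k ↔ IsPerfMatching n M ∧ s(x, y) ∈ M ∧ #(M ∩ S.sym2) = k := by
  simp [matchingLayer, mem_matchingsThrough, and_assoc]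

theorem switch_inter_sym2 {u v : Fin n} (hu : u ∈ S) (hv : v ∈ S) (hpu : partner M u ∉ S)
    (hpv : partner M v ∉ S) : switch M u v ∩ S.sym2 = insert s(u, v) (M ∩ S.sym2) := by
  ext f
  simp only [mem_inter, mem_insert, mem_switch]
  constructor
  · rintro ⟨rfl | rfl | ⟨hf, -⟩, hfS⟩
    · exact Or.inl rfl
    · exact absurd (mk_mem_sym2_iff.1 hfS).1 hpu
    · exact Or.inr ⟨hf, hfS⟩
  · rintro (rfl | ⟨hf, hfS⟩)
    · exact ⟨Or.inl rfl, mk_mem_sym2_iff.2 ⟨hu, hv⟩⟩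
    · refine ⟨Or.inr (Or.inr ⟨hf, ?_, ?_⟩), hfS⟩ <;> rintro rfl
      · exact hpu (mk_mem_sym2_iff.1 hfS).2
      · exact hpv (mk_mem_sym2_iff.1 hfS).2

variable (hx : x ∉ S) (hy : y ∉ S)
include hx hy

theorem notMem_edge_of_mem {w : Fin n} (hw : w ∈ S) : w ∉ s(x, y) := fun h => by
  rcases Sym2.mem_iff.1 h with rfl | rfl <;> contradiction

theorem switch_mem_matchingLayer {k : ℕ} (hMk : M ∈ matchingLayer x y S k) {u v : Fin n}
    (hu : u ∈ S) (hv : v ∈ S) (huv : u ≠ v) (hpu : partner M u ∉ S) (hpv : partner M v ∉ S) :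
    switch M u v ∈ matchingLayer x y S (k + 1) := by
  obtain ⟨hM, hxy, hk⟩ := mem_matchingLayer.1 hMk
  have hvu : partner M u ≠ v := fun h => hpu (h ▸ hv)
  have hne : ∀ w ∈ S, s(x, y) ≠ s(w, partner M w) := fun w hw h =>
    notMem_edge_of_mem hx hy hw (h ▸ Sym2.mem_mk_left _ _)
  refine mem_matchingLayer.2 ⟨hM.switch huv hvu, mem_switch.2 ?_, ?_⟩
  · refine Or.inr (Or.inr ⟨hxy, hne u hu, hne v hv⟩)
  · rw [switch_inter_sym2 hu hv hpu hpv, card_insert_of_notMem, hk]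
    exact fun h => hvu (hM.partner_eq_of_mk_mem (mem_inter.1 h).1)

theorem card_sdiff_pair_add {k : ℕ} (hMk : M ∈ matchingLayer x y S k) :
    #({t ∈ Sᶜ | partner M t ∉ S} \ {x, y}) + 2 * #S + 2 = n + 2 * k := by
  obtain ⟨hM, hxy, hk⟩ := mem_matchingLayer.1 hMk
  have hx' : x ∈ {t ∈ Sᶜ | partner M t ∉ S} := by
    simpa [hM.partner_eq_of_mk_mem hxy] using ⟨hx, hy⟩
  have hy' : y ∈ {t ∈ Sᶜ | partner M t ∉ S} := by
    simpa [hM.partner_eq_of_mk_mem (Sym2.eq_swap ▸ hxy)] using ⟨hy, hx⟩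
  have hne : x ≠ y := fun h => hM.1 _ hxy (Sym2.mk_isDiag_iff.2 h)
  rw [card_sdiff_of_subset (insert_subset hx' (singleton_subset_iff.2 hy')), card_pair hne]
  have := hM.card_filter_compl_partner_notMem_add S
  have := card_le_card (insert_subset hx' (singleton_subset_iff.2 hy'))
  rw [card_pair hne] at this
  omega

theorem sum_card_offDiag_le (k : ℕ) :
    ∑ M ∈ matchingLayer x y S k, #{v ∈ S | partner M v ∉ S}.offDiag ≤
      ∑ M ∈ matchingLayer x y S (k + 1),
        #{v ∈ S | partner M v ∈ S} * #({t ∈ Sᶜ | partner M t ∉ S} \ {x, y}) := by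
  simp only [← card_sigma, ← card_product]
  refine card_le_card_of_injOn (fun p => ⟨switch p.1 p.2.1 p.2.2, (p.2.1, partner p.1 p.2.1)⟩)
    ?_ ?_
  · rintro ⟨M, u, v⟩ hp
    simp only [coe_sigma, Set.mem_sigma_iff, mem_coe, mem_offDiag, mem_filter] at hp
    obtain ⟨hMk, ⟨hu, hpu⟩, ⟨hv, hpv⟩, huv⟩ := hp
    obtain ⟨hM, hxy, -⟩ := mem_matchingLayer.1 hMk
    have hvu : partner M u ≠ v := fun h => hpu (h ▸ hv)
    have hpux : partner M u ∉ ({x, y} : Finset (Fin n)) := by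
      simpa only [mem_insert, mem_singleton, Sym2.mem_iff] using
        hM.partner_notMem_of_notMem hxy (notMem_edge_of_mem hx hy hu)
    simp only [coe_sigma, Set.mem_sigma_iff, mem_coe, mem_product, mem_filter, mem_sdiff, mem_compl]
    refine ⟨switch_mem_matchingLayer hx hy hMk hu hv huv hpu hpv, ⟨hu, ?_⟩, ⟨hpu, ?_⟩, hpux⟩
    · rw [hM.partner_switch_left huv hvu]; exact hv
    · rw [hM.partner_switch_partner_left huv hvu]; exact hpv
  · rintro ⟨M, u, v⟩ hp ⟨M', u', v'⟩ hp' heq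
    simp only [coe_sigma, Set.mem_sigma_iff, mem_coe, mem_offDiag, mem_filter] at hp hp'
    obtain ⟨hMk, ⟨-, hpu⟩, ⟨hv, -⟩, huv⟩ := hp
    obtain ⟨hMk', ⟨-, hpu'⟩, ⟨hv', -⟩, huv'⟩ := hp'
    simp only [Sigma.mk.injEq, heq_iff_eq, Prod.mk.injEq] at heq
    obtain ⟨hsw, rfl, hp⟩ := heq
    obtain ⟨rfl, rfl⟩ := (mem_matchingLayer.1 hMk).1.eq_of_switch_eq huv (fun h => hpu (h ▸ hv))
      (mem_matchingLayer.1 hMk').1 huv' (fun h => hpu' (h ▸ hv')) hsw hp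
    rfl

theorem card_matchingLayer_mul_le (k : ℕ) :
    (#(matchingLayer x y S k) : ℝ) * ((#S - 2 * k) * (#S - 2 * k - 1)) ≤
      #(matchingLayer x y S (k + 1)) * (2 * (k + 1) * (n + 2 * k - 2 * #S)) := by
  have hsources : ∀ M ∈ matchingLayer x y S k,
      (#{v ∈ S | partner M v ∉ S}.offDiag : ℝ) = (#S - 2 * k) * (#S - 2 * k - 1) := by
    intro M hMk
    obtain ⟨hM, -, hk⟩ := mem_matchingLayer.1 hMk
    have h := hM.card_filter_partner_notMem_add S
    rw [hk] at h
    rw [offDiag_card, Nat.cast_sub (Nat.le_mul_self _), ← h]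
    push_cast
    ring
  have htargets : ∀ M ∈ matchingLayer x y S (k + 1),
      (#{v ∈ S | partner M v ∈ S} : ℝ) * #({t ∈ Sᶜ | partner M t ∉ S} \ {x, y}) =
        2 * (k + 1) * (n + 2 * k - 2 * #S) := by
    intro M hMk
    obtain ⟨hM, -, hk⟩ := mem_matchingLayer.1 hMk
    have h : ((_ + 2 * #S + 2 : ℕ) : ℝ) = ((n + 2 * (k + 1) : ℕ) : ℝ) :=
      congrArg _ (card_sdiff_pair_add hx hy hMk)
    rw [hM.card_filter_partner_mem, hk]
    push_cast at h ⊢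
    rw [eq_sub_of_add_eq (eq_sub_of_add_eq h)]
    ring
  have := (Nat.cast_le (α := ℝ)).2 (sum_card_offDiag_le hx hy k)
  push_cast at this
  rw [sum_congr rfl hsources, sum_congr rfl htargets] at this
  simpa only [sum_const, nsmul_eq_mul] using this

end Switching

section PiGraph

variable {n : ℕ} {M : Finset (Sym2 (Fin n))} (G : SimpleGraph (Fin n))

theorem sup_fromEdgeSet_adj_of_mem {f : Sym2 (Fin n)} (hf : f ∈ M) {u v : Fin n} (hu : u ∈ f)
    (hv : v ∈ f) (huv : u ≠ v) : (G ⊔ SimpleGraph.fromEdgeSet ↑M).Adj u v :=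
  Or.inr ⟨show s(u, v) ∈ M by rwa [← (Sym2.mem_and_mem_iff huv).1 ⟨hu, hv⟩], huv⟩

theorem filter_piAdj_eq (hM : IsPerfMatching n M) {x y : Fin n} (hxy : s(x, y) ∈ M) :
    M.filter (PiAdj (G ⊔ SimpleGraph.fromEdgeSet ↑M) M s(x, y)) =
      M ∩ (G.commonNeighbors x y).toFinset.sym2 := by
  ext f
  simp only [mem_filter, mem_inter, mem_sym2_iff, Set.mem_toFinset,
    SimpleGraph.mem_commonNeighbors, PiAdj]
  refine and_congr_right fun hf => ?_
  constructor
  · rintro ⟨-, -, hne, hadj⟩ v hv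
    have hve : v ∉ s(x, y) := fun h => hne (hM.eq_of_mem_of_mem hxy hf h hv)
    have hG : ∀ u ∈ s(x, y), G.Adj u v := by
      intro u hu
      rcases hadj u v (Or.inl hu) (Or.inr hv) (fun h => hve (h ▸ hu)) with h | ⟨h, -⟩
      · exact h
      · exact absurd (hM.eq_of_mem_of_mem h hxy (Sym2.mem_mk_left u v) hu ▸
          Sym2.mem_mk_right u v) hve
    exact ⟨hG x (Sym2.mem_mk_left x y), hG y (Sym2.mem_mk_right x y)⟩
  · intro hG
    refine ⟨hxy, hf, fun h => G.irrefl (hG x (h ▸ Sym2.mem_mk_left x y)).1, ?_⟩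
    have hcross : ∀ u ∈ s(x, y), ∀ v ∈ f, G.Adj u v := fun u hu v hv => by
      rcases Sym2.mem_iff.1 hu with rfl | rfl
      exacts [(hG v hv).1, (hG v hv).2]
    rintro u v (hu | hu) (hv | hv) huv
    · exact sup_fromEdgeSet_adj_of_mem G hxy hu hv huv
    · exact Or.inl (hcross u hu v hv)
    · exact Or.inl (hcross v hv u hu).symm
    · exact sup_fromEdgeSet_adj_of_mem G hf hu hv huv

end PiGraph

theorem card_commonNeighbors_ge {V : Type*} [Fintype V] (G : SimpleGraph V) {α : ℝ}
    (hG : ∀ v, α * Fintype.card V ≤ #{w | G.Adj v w}) (x y : V) :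
    (2 * α - 1) * Fintype.card V ≤ #(G.commonNeighbors x y).toFinset := by
  set A : Finset V := {w | G.Adj x w}
  set B : Finset V := {w | G.Adj y w}
  have hinter : (G.commonNeighbors x y).toFinset = A ∩ B := by
    ext w
    simp [A, B, SimpleGraph.mem_commonNeighbors]
  have hunion := card_le_univ (A ∪ B)
  have := card_union_add_card_inter A B
  have hsum : (#A + #B : ℝ) ≤ Fintype.card V + #(A ∩ B) := by exact_mod_cast (by omega)
  rw [hinter]
  linarith [hG x, hG y]

noncomputable def lowPiDegreeMatchings {n : ℕ} (G : SimpleGraph (Fin n)) (x y : Fin n) (t : ℝ) :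
    Finset (Finset (Sym2 (Fin n))) :=
  (matchings n).filter fun M => s(x, y) ∈ M ∧
    (#(M.filter fun f => PiAdj (G ⊔ SimpleGraph.fromEdgeSet ↑M) M s(x, y) f) : ℝ) ≤ t

theorem lowPiDegreeMatchings_eq {n : ℕ} (G : SimpleGraph (Fin n)) (x y : Fin n) (t : ℝ) :
    lowPiDegreeMatchings G x y t =
      {M ∈ matchingsThrough x y | (#(M ∩ (G.commonNeighbors x y).toFinset.sym2) : ℝ) ≤ t} := by
  rw [matchingsThrough, filter_filter]
  refine filter_congr fun M hM => and_congr_right fun hxy => ?_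
  rw [filter_piAdj_eq G (mem_filter.1 hM).2 hxy]

theorem switching_ratio_le {β s k n : ℝ} (hβ0 : 0 < β) (hβ : β ≤ 0.65) (hs : β * n ≤ s)
    (hk0 : 0 ≤ k) (hk : k + 1 ≤ 3 / 8 * β ^ 2 * n) (hn : 400 ≤ β ^ 2 * n) :
    12 * (k + 1) * (n + 2 * k - 2 * s) ≤ 5 * ((s - 2 * k) * (s - 2 * k - 1)) := by
  have hn0 : 0 < n := by nlinarith
  have hβn : 400 ≤ β * n := by nlinarith
  have hgap : 1 / 2 * β * n ≤ β * n - 2 * (k + 1) := by nlinarith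
  have hcore : 12 * (k + 1) * (n - 2 * β * n + 2 * (k + 1)) + 1 / 2 * β ^ 2 * n ^ 2 ≤
      5 * (β * n - 2 * (k + 1)) ^ 2 := by
    nlinarith [mul_nonneg (by linarith : 0 ≤ 3 / 8 * β ^ 2 * n - (k + 1))
        (by nlinarith : 0 ≤ 12 * n - 4 * β * n + 8 * (k + 1)),
      mul_nonneg (by linarith : (0:ℝ) ≤ 0.65 - β) (by positivity : 0 ≤ β ^ 3 * n ^ 2)]
  nlinarith [mul_nonneg (by linarith : 0 ≤ k + 1) (by linarith : 0 ≤ s - β * n)]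

theorem le_pow_mul_of_le_mul_succ {a : ℕ → ℝ} {q : ℝ} (hq : 0 ≤ q) {K : ℕ}
    (ha : ∀ k < K, a k ≤ q * a (k + 1)) {k : ℕ} (hk : k ≤ K) : a k ≤ q ^ (K - k) * a K := by
  obtain ⟨d, rfl⟩ := Nat.exists_eq_add_of_le hk
  induction d generalizing k with
  | zero => simp
  | succ d ih =>
    have := @ih (k + 1) (fun j hj => ha j (by omega)) (by omega)
    rw [Nat.add_sub_cancel_left, add_right_comm] at this
    calc a k ≤ q * a (k + 1) := ha k (by omega)
      _ ≤ q * (q ^ d * a (k + (d + 1))) := mul_le_mul_of_nonneg_left this hq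
      _ = q ^ (k + (d + 1) - k) * a (k + (d + 1)) := by
          rw [Nat.add_sub_cancel_left, pow_succ', mul_assoc]

theorem sum_range_le_of_le_mul_succ {a : ℕ → ℝ} {q D : ℝ} (hq0 : 0 ≤ q) (hq1 : q < 1) {K : ℕ}
    (ha : ∀ k < K, a k ≤ q * a (k + 1)) (hD : a K ≤ D) (hD0 : 0 ≤ D) {t : ℕ}
    (ht : t ≤ K + 1) : ∑ k ∈ range t, a k ≤ q ^ (K + 1 - t) / (1 - q) * D := by
  induction t with
  | zero => simp only [range_zero, sum_empty]; have := sub_pos.2 hq1; positivity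
  | succ t ih =>
    have hat : a t ≤ q ^ (K - t) * D := (le_pow_mul_of_le_mul_succ hq0 ha (by omega)).trans
      (mul_le_mul_of_nonneg_left hD (by positivity))
    have hpow : q ^ (K + 1 - t) = q * q ^ (K - t) := by
      rw [← pow_succ', Nat.sub_add_comm (by omega)]
    rw [sum_range_succ, Nat.add_sub_add_right]
    calc ∑ k ∈ range t, a k + a t ≤ q ^ (K + 1 - t) / (1 - q) * D + q ^ (K - t) * D :=
          add_le_add (ih (by omega)) hat
      _ = q ^ (K - t) / (1 - q) * D := by
          rw [hpow]; field_simp [(sub_pos.2 hq1).ne']; ring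

theorem six_mul_pow_le_exp {X : ℝ} (hX : 50 * Real.log 6 / Real.log (6 / 5) ≤ X) {g : ℕ}
    (hg : X / 25 ≤ g) : 6 * (5 / 6 : ℝ) ^ g ≤ Real.exp (-(Real.log (6 / 5) * X / 50)) := by
  have hL : 0 < Real.log (6 / 5) := Real.log_pos (by norm_num)
  have h56 : Real.log (5 / 6) = -Real.log (6 / 5) := by
    rw [← Real.log_inv]; norm_num
  rw [← Real.exp_log (by positivity : (0 : ℝ) < 6 * (5 / 6) ^ g), Real.exp_le_exp,
    Real.log_mul (by norm_num) (by positivity), Real.log_pow, h56]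
  rw [div_le_iff₀ hL] at hX
  nlinarith

section Layers

variable {n : ℕ} {x y : Fin n} {S : Finset (Fin n)}

theorem card_filter_le_eq_sum_card_matchingLayer (t : ℕ) :
    #{M ∈ matchingsThrough x y | #(M ∩ S.sym2) ≤ t} =
      ∑ k ∈ range (t + 1), #(matchingLayer x y S k) := by
  rw [card_eq_sum_card_fiberwise (f := fun M => #(M ∩ S.sym2)) (t := range (t + 1))]
  · refine sum_congr rfl fun k hk => ?_
    rw [matchingLayer, filter_filter]
    refine congrArg card (filter_congr fun M _ => ?_)
    rw [mem_range] at hk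
    constructor
    · exact And.right
    · intro h; exact ⟨h ▸ Nat.lt_succ_iff.1 hk, h⟩
  · intro M hM
    rw [mem_coe, mem_filter] at hM
    exact mem_coe.2 (mem_range.2 (Nat.lt_succ_of_le hM.2))

variable (hx : x ∉ S) (hy : y ∉ S)
include hx hy

theorem card_matchingLayer_le_mul_succ {β : ℝ} (hβ0 : 0 < β) (hβ : β ≤ 0.65)
    (hn : 400 ≤ β ^ 2 * n) (hS : β * n ≤ #S) {k : ℕ} (hk : (k : ℝ) + 1 ≤ 3 / 8 * β ^ 2 * n) :
    (#(matchingLayer x y S k) : ℝ) ≤ 5 / 6 * #(matchingLayer x y S (k + 1)) := by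
  have hratio := switching_ratio_le hβ0 hβ hS k.cast_nonneg hk hn
  have hpos : 0 < ((#S : ℝ) - 2 * k) * (#S - 2 * k - 1) := by
    have : (0 : ℝ) ≤ β * n := by nlinarith
    apply mul_pos <;> nlinarith
  refine le_of_mul_le_mul_right ?_ hpos
  calc _ ≤ _ := card_matchingLayer_mul_le hx hy k
    _ ≤ (#(matchingLayer x y S (k + 1)) : ℝ) * (5 / 6 * ((#S - 2 * k) * (#S - 2 * k - 1))) :=
      mul_le_mul_of_nonneg_left (by linarith) (Nat.cast_nonneg _)
    _ = _ := by ring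

theorem card_filter_inter_sym2_le_exp {β : ℝ} (hβ0 : 0 < β) (hβ : β ≤ 0.65)
    (hn : 400 + 50 * Real.log 6 / Real.log (6 / 5) ≤ β ^ 2 * n) (hS : β * n ≤ #S) :
    (#{M ∈ matchingsThrough x y | (#(M ∩ S.sym2) : ℝ) ≤ β ^ 3 * n / 2} : ℝ) ≤
      Real.exp (-(Real.log (6 / 5) * (β ^ 2 * n) / 50)) * #(matchingsThrough x y) := by
  have hlog : 0 ≤ 50 * Real.log 6 / Real.log (6 / 5) :=
    div_nonneg (by positivity) (Real.log_pos (by norm_num)).le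
  set t := ⌊β ^ 3 * n / 2⌋₊
  set g := ⌈β ^ 2 * n / 25⌉₊
  have htg : (t : ℝ) + g ≤ 3 / 8 * β ^ 2 * n := by
    have ht : (t : ℝ) ≤ β ^ 3 * n / 2 := Nat.floor_le (by positivity)
    have hg : (g : ℝ) < β ^ 2 * n / 25 + 1 := Nat.ceil_lt_add_one (by positivity)
    have hβ3 : β ^ 3 * n ≤ 0.65 * (β ^ 2 * n) := by
      have : 0 ≤ β ^ 2 * n := by positivity
      nlinarith
    linarith
  have hevent : {M ∈ matchingsThrough x y | (#(M ∩ S.sym2) : ℝ) ≤ β ^ 3 * n / 2} =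
      {M ∈ matchingsThrough x y | #(M ∩ S.sym2) ≤ t} :=
    filter_congr fun M _ => (Nat.le_floor_iff (by positivity)).symm
  have hlayers := sum_range_le_of_le_mul_succ (a := fun k => (#(matchingLayer x y S k) : ℝ))
    (D := #(matchingsThrough x y)) (by norm_num) (by norm_num)
    (fun k hk => card_matchingLayer_le_mul_succ hx hy hβ0 hβ (by linarith) hS (by
      have : ((k + 1 : ℕ) : ℝ) ≤ (t + g : ℕ) := Nat.cast_le.2 hk
      push_cast at this
      linarith))
    (Nat.cast_le.2 (card_le_card (filter_subset _ _))) (Nat.cast_nonneg _)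
    (t := t + 1) (by omega)
  rw [hevent, card_filter_le_eq_sum_card_matchingLayer, Nat.cast_sum]
  refine hlayers.trans (mul_le_mul_of_nonneg_right ?_ (Nat.cast_nonneg _))
  rw [show t + g + 1 - (t + 1) = g by omega]
  calc (5 / 6 : ℝ) ^ g / (1 - 5 / 6) = 6 * (5 / 6) ^ g := by ring
    _ ≤ _ := six_mul_pow_le_exp (by linarith) (Nat.le_ceil _)

theorem filter_inter_sym2_eq_empty {β : ℝ} (hβ : 0.65 ≤ β) (hS : β * n ≤ #S) :
    {M ∈ matchingsThrough x y | (#(M ∩ S.sym2) : ℝ) ≤ β ^ 3 * n / 2} = ∅ := by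
  refine filter_false_of_mem fun M hM hle => ?_
  have hMk : M ∈ matchingLayer x y S #(M ∩ S.sym2) := mem_filter.2 ⟨hM, rfl⟩
  have hcount := card_sdiff_pair_add hx hy hMk
  have hinner := (mem_matchingsThrough.1 hM).1.card_filter_partner_mem S
  have hsub := card_filter_le S (partner M · ∈ S)
  have hsn : (#S : ℝ) + 2 ≤ n := by exact_mod_cast (by omega : #S + 2 ≤ n)
  have hk : 2 * (#S : ℝ) + 2 ≤ n + 2 * #(M ∩ S.sym2) := by
    exact_mod_cast (by omega : 2 * #S + 2 ≤ n + 2 * #(M ∩ S.sym2))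
  have hβ1 : β < 1 := by
    by_contra h
    nlinarith
  nlinarith [mul_nonneg (mul_nonneg (by linarith : (0 : ℝ) ≤ 1 - β)
    (by nlinarith : (0 : ℝ) ≤ β ^ 2 + β - 1)) n.cast_nonneg]

end Layers

/-- For `α > 1/2`, `n = 2m` even, `G` of minimum degree at least `α n`, a fixed edge
`e = {x, y}` of `K_n`, and `M` a uniformly random perfect matching conditioned to contain
`e`, there is a constant `c > 0` depending only on `α` such that for all large `n` the
probability that the degree of `e` in `Π(G ∪ M)` is at most `(2α − 1)³ n / 2` is at most
`exp(−c (2α − 1)⁶ n)`. -/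
theorem pi_degree_concentration :
    ∀ α : ℝ, 1 / 2 < α → ∃ c : ℝ, 0 < c ∧ ∃ N : ℕ, ∀ m : ℕ, N ≤ m →
      ∀ G : SimpleGraph (Fin (2 * m)),
        (∀ v : Fin (2 * m),
            α * (2 * m) ≤ ((Finset.univ.filter fun w => G.Adj v w).card : ℝ)) →
        ∀ x y : Fin (2 * m), x ≠ y →
          ((((matchings (2 * m)).filter fun M => s(x, y) ∈ M ∧
              ((M.filter fun f =>
                  PiAdj (G ⊔ SimpleGraph.fromEdgeSet (↑M)) M s(x, y) f).card : ℝ) ≤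
                (2 * α - 1) ^ 3 * (2 * m) / 2).card : ℝ) /
            (((matchings (2 * m)).filter fun M => s(x, y) ∈ M).card : ℝ)) ≤
          Real.exp (-(c * (2 * α - 1) ^ 6 * (2 * m))) := by
  intro α hα
  set β := 2 * α - 1
  have hβ0 : 0 < β := by linarith
  refine ⟨Real.log (6 / 5) / (50 * β ^ 4), div_pos (Real.log_pos (by norm_num)) (by positivity),
    ⌈(400 + 50 * Real.log 6 / Real.log (6 / 5)) / β ^ 2⌉₊, fun m hm G hG x y _ => ?_⟩
  have hn : ((2 * m : ℕ) : ℝ) = 2 * m := by push_cast; ring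
  set S := (G.commonNeighbors x y).toFinset
  have hS : β * ((2 * m : ℕ) : ℝ) ≤ #S := by
    have := card_commonNeighbors_ge G (α := α) (by simpa using hG) x y
    rwa [Fintype.card_fin] at this
  have hx : x ∉ S := Set.mem_toFinset.not.2 (G.notMem_commonNeighbors_left x y)
  have hy : y ∉ S := Set.mem_toFinset.not.2 (G.notMem_commonNeighbors_right x y)
  have hexp : Real.log (6 / 5) / (50 * β ^ 4) * β ^ 6 * ((2 * m : ℕ) : ℝ) =
      Real.log (6 / 5) * (β ^ 2 * ((2 * m : ℕ) : ℝ)) / 50 := by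
    field_simp
  change (#(lowPiDegreeMatchings G x y (β ^ 3 * (2 * m) / 2)) : ℝ) /
    #(matchingsThrough x y) ≤ _
  rw [← hn, lowPiDegreeMatchings_eq, hexp]
  rcases le_or_gt β 0.65 with hsmall | hlarge
  · refine div_le_of_le_mul₀ (Nat.cast_nonneg _) (Real.exp_pos _).le
      (card_filter_inter_sym2_le_exp hx hy hβ0 hsmall ?_ hS)
    have := (div_le_iff₀ (by positivity)).1 (Nat.ceil_le.1 hm)
    rw [hn]
    nlinarith
  · rw [filter_inter_sym2_eq_empty hx hy hlarge.le hS, card_empty, Nat.cast_zero, zero_div]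
    exact (Real.exp_pos _).le
end

section
/- Let Γ be a graph on vertex set [n] with n = 2m even and let M be a perfect matching of K_n all of whose edges are edges of Γ. Let (x₁, x₂, …, x_{2k}) be a 2-path in Γ (with respect to M), let ℓ ≤ k − 2, and suppose that {x_{2ℓ−1}, x_{2k}}, {x_{2ℓ}, x_{2k−1}} and {x_{2ℓ}, x_{2k}} are all edges of Γ. Then the sequence (x₁, x₂, …, x_{2ℓ}, x_{2k}, x_{2k−1}, x_{2k−2}, …, x_{2ℓ+1}) obtained by appending the reversal of (x_{2ℓ+1}, …, x_{2k}) is also a 2-path in Γ (with respect to M). -/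
open Finset
open scoped Classical

/-- A 2-path (with respect to the matching `M`) with `k` pillars, recorded 0-indexed:
`x 0, x 1, …, x (2k − 1)` are distinct, consecutive vertices are adjacent in `Γ`,
`{x (2i), x (2i+1)} ∈ M` for `i < k`, and vertices at distance two are adjacent in `Γ`. -/
def IsTwoPath {n : ℕ} (Γ : SimpleGraph (Fin n)) (M : Finset (Sym2 (Fin n))) (k : ℕ)
    (x : ℕ → Fin n) : Prop :=
  Set.InjOn x (Set.Iio (2 * k)) ∧
  (∀ i, i + 1 < 2 * k → Γ.Adj (x i) (x (i + 1))) ∧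
  (∀ i, i < k → s(x (2 * i), x (2 * i + 1)) ∈ M) ∧
  (∀ i, i + 2 < 2 * k → Γ.Adj (x i) (x (i + 2)))

/-- Rotation: if `(x₁, …, x_{2k})` is a 2-path (0-indexed as `x 0, …, x (2k−1)`),
`1 ≤ ℓ ≤ k − 2`, and `{x_{2ℓ−1}, x_{2k}}`, `{x_{2ℓ}, x_{2k−1}}`, `{x_{2ℓ}, x_{2k}}` are
edges of `Γ`, then `(x₁, …, x_{2ℓ}, x_{2k}, x_{2k−1}, …, x_{2ℓ+1})` is also a 2-path. -/
theorem twoPath_rotation (n m k ℓ : ℕ) (hn : n = 2 * m)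
    (Γ : SimpleGraph (Fin n)) (M : Finset (Sym2 (Fin n)))
    (hM : IsPerfMatching n M) (hMΓ : ∀ e ∈ M, e ∈ Γ.edgeSet)
    (x : ℕ → Fin n) (hx : IsTwoPath Γ M k x)
    (hℓ1 : 1 ≤ ℓ) (hℓ2 : ℓ + 2 ≤ k)
    (h1 : Γ.Adj (x (2 * ℓ - 2)) (x (2 * k - 1)))
    (h2 : Γ.Adj (x (2 * ℓ - 1)) (x (2 * k - 2)))
    (h3 : Γ.Adj (x (2 * ℓ - 1)) (x (2 * k - 1))) :
    IsTwoPath Γ M k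
      (fun i => if i < 2 * ℓ then x i else x (2 * k - 1 - (i - 2 * ℓ))) := by

  unfold IsTwoPath at hx ⊢
  obtain ⟨hinj, hadj1, hpil, hadj2⟩ := hx
  refine ⟨?_, ?_, ?_, ?_⟩
  · intro a ha b hb hab
    simp only [Set.mem_Iio] at ha hb
    simp only [← apply_ite x] at hab
    have hmem : ∀ c, c < 2*k → (if c < 2*ℓ then c else 2*k-1-(c-2*ℓ)) ∈ Set.Iio (2*k) := by
      intro c hc; simp only [Set.mem_Iio]; split <;> omega
    have h := hinj (hmem a ha) (hmem b hb) hab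
    split_ifs at h <;> omega
  · intro i hi
    dsimp only
    by_cases hia : i < 2*ℓ
    · by_cases hib : i + 1 < 2*ℓ
      · rw [if_pos hia, if_pos hib]; exact hadj1 i (by omega)
      · rw [if_pos hia, if_neg hib]
        have e : 2*k-1-(i+1-2*ℓ) = 2*k-1 := by omega
        have e2 : i = 2*ℓ-1 := by omega
        rw [e, e2]; exact h3
    · rw [if_neg hia, if_neg (by omega : ¬ i+1 < 2*ℓ)]
      have e1 : 2*k-1-(i-2*ℓ) = (2*k-2-(i-2*ℓ)) + 1 := by omega
      have e2 : 2*k-1-(i+1-2*ℓ) = 2*k-2-(i-2*ℓ) := by omega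
      rw [e1, e2]
      exact (hadj1 _ (by omega)).symm
  · intro i hik
    dsimp only
    by_cases h : i < ℓ
    · rw [if_pos (by omega), if_pos (by omega)]; exact hpil i (by omega)
    · rw [if_neg (by omega), if_neg (by omega)]
      have e1 : 2*k-1-(2*i-2*ℓ) = 2*(k-1-(i-ℓ)) + 1 := by omega
      have e2 : 2*k-1-(2*i+1-2*ℓ) = 2*(k-1-(i-ℓ)) := by omega
      rw [e1, e2, Sym2.eq_swap]
      exact hpil _ (by omega)
  · intro i hi
    dsimp only
    by_cases hia : i < 2*ℓ
    · by_cases hib : i + 2 < 2*ℓ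
      · rw [if_pos hia, if_pos hib]; exact hadj2 i (by omega)
      · rw [if_pos hia, if_neg hib]
        by_cases hc : i + 2 = 2*ℓ
        · have e : 2*k-1-(i+2-2*ℓ) = 2*k-1 := by omega
          have e2 : i = 2*ℓ-2 := by omega
          rw [e, e2]; exact h1
        · have e : 2*k-1-(i+2-2*ℓ) = 2*k-2 := by omega
          have e2 : i = 2*ℓ-1 := by omega
          rw [e, e2]; exact h2
    · rw [if_neg hia, if_neg (by omega : ¬ i+2 < 2*ℓ)]
      have e1 : 2*k-1-(i-2*ℓ) = (2*k-3-(i-2*ℓ)) + 2 := by omega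
      have e2 : 2*k-1-(i+2-2*ℓ) = 2*k-3-(i-2*ℓ) := by omega
      rw [e1, e2]
      exact (hadj2 _ (by omega)).symm
end

section
/- Let Γ be a graph on vertex set [n] with n = 2m even and let M be a perfect matching of K_n all of whose edges are edges of Γ. Let (y₁, y₂, …, y_{2k}) be a 2-path in Γ (with respect to M) with 2k < n, and suppose that {y_{2k−1}, y₁}, {y₁, y_{2k}} and {y_{2k}, y₂} are edges of Γ (so the 2-path closes into a cycle). Suppose further that there exist 1 ≤ ℓ < k and a matching edge {u, v} ∈ M with u, v ∉ {y₁, …, y_{2k}} such that {y_{2ℓ−1}, u}, {u, y_{2ℓ}} and {y_{2ℓ}, v} are edges of Γ. Then the sequence (y_{2ℓ+1}, y_{2ℓ+2}, …, y_{2k}, y₁, y₂, …, y_{2ℓ−1}, y_{2ℓ}, u, v) is a 2-path in Γ (with respect to M) on 2k + 2 vertices. -/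
open Finset
open scoped Classical

/-- Cycle extension: if the 2-path `(y₁, …, y_{2k})` (0-indexed as `y 0, …, y (2k−1)`,
with `2k < n`) closes into a cycle (`{y_{2k−1}, y₁}`, `{y₁, y_{2k}}`, `{y_{2k}, y₂}` are
edges), and there are `1 ≤ ℓ < k` and a matching edge `{u, v}` disjoint from the path with
`{y_{2ℓ−1}, u}`, `{u, y_{2ℓ}}`, `{y_{2ℓ}, v}` edges of `Γ`, then
`(y_{2ℓ+1}, …, y_{2k}, y₁, …, y_{2ℓ}, u, v)` is a 2-path on `2k + 2` vertices. -/
theorem twoPath_cycle_extension (n m k ℓ : ℕ) (hn : n = 2 * m)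
    (Γ : SimpleGraph (Fin n)) (M : Finset (Sym2 (Fin n)))
    (hM : IsPerfMatching n M) (hMΓ : ∀ e ∈ M, e ∈ Γ.edgeSet)
    (y : ℕ → Fin n) (hy : IsTwoPath Γ M k y) (h2k : 2 * k < n)
    (hc1 : Γ.Adj (y (2 * k - 2)) (y 0))
    (hc2 : Γ.Adj (y 0) (y (2 * k - 1)))
    (hc3 : Γ.Adj (y (2 * k - 1)) (y 1))
    (hℓ1 : 1 ≤ ℓ) (hℓk : ℓ < k)
    (u v : Fin n) (huv : s(u, v) ∈ M)
    (hu : ∀ i < 2 * k, y i ≠ u) (hv : ∀ i < 2 * k, y i ≠ v)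
    (h1 : Γ.Adj (y (2 * ℓ - 2)) u)
    (h2 : Γ.Adj u (y (2 * ℓ - 1)))
    (h3 : Γ.Adj (y (2 * ℓ - 1)) v) :
    IsTwoPath Γ M (k + 1)
      (fun i =>
        if i < 2 * k - 2 * ℓ then y (2 * ℓ + i)
        else if i < 2 * k then y (i - (2 * k - 2 * ℓ))
        else if i = 2 * k then u else v) := by
  obtain ⟨hinj, hadj, hmatch, hadj2⟩ := hy
  have hKL : 2 * ℓ + 2 ≤ 2 * k := by omega
  have huv' : u ≠ v := by
    intro h
    exact hM.1 _ huv (by simp [h])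
  have hadjuv : Γ.Adj u v := Γ.mem_edgeSet.1 (hMΓ _ huv)
  refine ⟨?_, ?_, ?_, ?_⟩
  · intro a ha b hb hab
    simp only [Set.mem_Iio] at ha hb
    simp only at hab
    split_ifs at hab
    all_goals first
      | omega
      | (exact absurd hab (hu _ (by omega)))
      | (exact absurd hab (hv _ (by omega)))
      | (exact absurd hab.symm (hu _ (by omega)))
      | (exact absurd hab.symm (hv _ (by omega)))
      | (exact absurd hab huv')
      | (exact absurd hab.symm huv')
      | (have := hinj (Set.mem_Iio.2 (by omega : _ < 2 * k))
          (Set.mem_Iio.2 (by omega : _ < 2 * k)) hab; omega)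
  · intro i hi
    dsimp only
    rcases lt_trichotomy (i + 1) (2 * k - 2 * ℓ) with c1 | c1 | c1
    · rw [if_pos (by omega : i < 2 * k - 2 * ℓ), if_pos c1,
        show 2 * ℓ + (i + 1) = 2 * ℓ + i + 1 from by omega]
      exact hadj _ (by omega)
    · rw [if_pos (by omega : i < 2 * k - 2 * ℓ), if_neg (by omega : ¬ i + 1 < 2 * k - 2 * ℓ),
        if_pos (by omega : i + 1 < 2 * k),
        show 2 * ℓ + i = 2 * k - 1 from by omega,
        show i + 1 - (2 * k - 2 * ℓ) = 0 from by omega]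
      exact hc2.symm
    · rcases lt_trichotomy (i + 1) (2 * k) with c2 | c2 | c2
      · rw [if_neg (by omega : ¬ i < 2 * k - 2 * ℓ), if_pos (by omega : i < 2 * k),
          if_neg (by omega : ¬ i + 1 < 2 * k - 2 * ℓ), if_pos c2,
          show i + 1 - (2 * k - 2 * ℓ) = i - (2 * k - 2 * ℓ) + 1 from by omega]
        exact hadj _ (by omega)
      · rw [if_neg (by omega : ¬ i < 2 * k - 2 * ℓ), if_pos (by omega : i < 2 * k),
          if_neg (by omega : ¬ i + 1 < 2 * k - 2 * ℓ), if_neg (by omega : ¬ i + 1 < 2 * k),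
          if_pos c2, show i - (2 * k - 2 * ℓ) = 2 * ℓ - 1 from by omega]
        exact h2.symm
      · rw [if_neg (by omega : ¬ i < 2 * k - 2 * ℓ), if_neg (by omega : ¬ i < 2 * k),
          if_pos (by omega : i = 2 * k), if_neg (by omega : ¬ i + 1 < 2 * k - 2 * ℓ),
          if_neg (by omega : ¬ i + 1 < 2 * k), if_neg (by omega : ¬ i + 1 = 2 * k)]
        exact hadjuv
  · intro i hi
    dsimp only
    rcases lt_trichotomy i (k - ℓ) with c1 | c1 | c1
    · rw [if_pos (by omega : 2 * i < 2 * k - 2 * ℓ), if_pos (by omega : 2 * i + 1 < 2 * k - 2 * ℓ),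
        show 2 * ℓ + 2 * i = 2 * (ℓ + i) from by omega,
        show 2 * ℓ + (2 * i + 1) = 2 * (ℓ + i) + 1 from by omega]
      exact hmatch _ (by omega)
    all_goals rcases lt_trichotomy i k with c2 | c2 | c2
    · rw [if_neg (by omega : ¬ 2 * i < 2 * k - 2 * ℓ), if_pos (by omega : 2 * i < 2 * k),
        if_neg (by omega : ¬ 2 * i + 1 < 2 * k - 2 * ℓ), if_pos (by omega : 2 * i + 1 < 2 * k),
        show 2 * i - (2 * k - 2 * ℓ) = 2 * (i - (k - ℓ)) from by omega,
        show 2 * i + 1 - (2 * k - 2 * ℓ) = 2 * (i - (k - ℓ)) + 1 from by omega]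
      exact hmatch _ (by omega)
    · rw [if_neg (by omega : ¬ 2 * i < 2 * k - 2 * ℓ), if_neg (by omega : ¬ 2 * i < 2 * k),
        if_pos (by omega : 2 * i = 2 * k), if_neg (by omega : ¬ 2 * i + 1 < 2 * k - 2 * ℓ),
        if_neg (by omega : ¬ 2 * i + 1 < 2 * k), if_neg (by omega : ¬ 2 * i + 1 = 2 * k)]
      exact huv
    · omega
    · rw [if_neg (by omega : ¬ 2 * i < 2 * k - 2 * ℓ), if_pos (by omega : 2 * i < 2 * k),
        if_neg (by omega : ¬ 2 * i + 1 < 2 * k - 2 * ℓ), if_pos (by omega : 2 * i + 1 < 2 * k),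
        show 2 * i - (2 * k - 2 * ℓ) = 2 * (i - (k - ℓ)) from by omega,
        show 2 * i + 1 - (2 * k - 2 * ℓ) = 2 * (i - (k - ℓ)) + 1 from by omega]
      exact hmatch _ (by omega)
    · rw [if_neg (by omega : ¬ 2 * i < 2 * k - 2 * ℓ), if_neg (by omega : ¬ 2 * i < 2 * k),
        if_pos (by omega : 2 * i = 2 * k), if_neg (by omega : ¬ 2 * i + 1 < 2 * k - 2 * ℓ),
        if_neg (by omega : ¬ 2 * i + 1 < 2 * k), if_neg (by omega : ¬ 2 * i + 1 = 2 * k)]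
      exact huv
    · omega
  · intro i hi
    dsimp only
    rcases lt_trichotomy (i + 2) (2 * k - 2 * ℓ) with c1 | c1 | c1
    · rw [if_pos (by omega : i < 2 * k - 2 * ℓ), if_pos c1,
        show 2 * ℓ + (i + 2) = 2 * ℓ + i + 2 from by omega]
      exact hadj2 _ (by omega)
    · rw [if_pos (by omega : i < 2 * k - 2 * ℓ), if_neg (by omega : ¬ i + 2 < 2 * k - 2 * ℓ),
        if_pos (by omega : i + 2 < 2 * k),
        show 2 * ℓ + i = 2 * k - 2 from by omega,
        show i + 2 - (2 * k - 2 * ℓ) = 0 from by omega]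
      exact hc1
    · rcases lt_trichotomy (i + 2) (2 * k - 2 * ℓ + 1) with c2 | c2 | c2
      · omega
      · rw [if_pos (by omega : i < 2 * k - 2 * ℓ), if_neg (by omega : ¬ i + 2 < 2 * k - 2 * ℓ),
          if_pos (by omega : i + 2 < 2 * k),
          show 2 * ℓ + i = 2 * k - 1 from by omega,
          show i + 2 - (2 * k - 2 * ℓ) = 1 from by omega]
        exact hc3
      · rcases lt_trichotomy (i + 2) (2 * k) with c3 | c3 | c3
        · rw [if_neg (by omega : ¬ i < 2 * k - 2 * ℓ), if_pos (by omega : i < 2 * k),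
            if_neg (by omega : ¬ i + 2 < 2 * k - 2 * ℓ), if_pos c3,
            show i + 2 - (2 * k - 2 * ℓ) = i - (2 * k - 2 * ℓ) + 2 from by omega]
          exact hadj2 _ (by omega)
        · rw [if_neg (by omega : ¬ i < 2 * k - 2 * ℓ), if_pos (by omega : i < 2 * k),
            if_neg (by omega : ¬ i + 2 < 2 * k - 2 * ℓ), if_neg (by omega : ¬ i + 2 < 2 * k),
            if_pos c3, show i - (2 * k - 2 * ℓ) = 2 * ℓ - 2 from by omega]
          exact h1
        · rw [if_neg (by omega : ¬ i < 2 * k - 2 * ℓ), if_pos (by omega : i < 2 * k),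
            if_neg (by omega : ¬ i + 2 < 2 * k - 2 * ℓ), if_neg (by omega : ¬ i + 2 < 2 * k),
            if_neg (by omega : ¬ i + 2 = 2 * k),
            show i - (2 * k - 2 * ℓ) = 2 * ℓ - 1 from by omega]
          exact h3
end

section
/- Let k ≥ 1, let n ≥ 2k + 1, and let s + t = n with s, t ≥ 1. Let G = K_{s,t} be the complete bipartite graph on vertex set [n] with parts A and B of sizes s and t, and let X be a binomial random graph G(n, p) independent of G. Then the expected number of bijections π : [n] → [n] that are the kth power of a Hamilton cycle in G + X is at most n! · p^{k(n − 2s)}. -/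
open Finset
open scoped Classical

/-- The `k`th power of a Hamilton cycle in a graph `Γ` on vertex set `Fin n`:
a bijection `π` such that `π i` and `π (i + d)` are adjacent for all `1 ≤ d ≤ k`
(indices cyclic modulo `n`). -/
def IsPowHamCycle (n k : ℕ) (Γ : SimpleGraph (Fin n)) (π : Equiv.Perm (Fin n)) : Prop :=
  ∀ i d : Fin n, 1 ≤ d.val → d.val ≤ k → Γ.Adj (π i) (π (i + d))

/-- The edge set of the complete graph on `Fin n`. -/
def completeEdges (n : ℕ) : Finset (Sym2 (Fin n)) :=
  Finset.univ.filter fun e => ¬ e.IsDiag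

/-- The complete bipartite graph `K_{s, n−s}` on `Fin n`, with parts
`A = {v : v < s}` and `B = {v : s ≤ v}`. -/
def bipGraph (n s : ℕ) : SimpleGraph (Fin n) :=
  SimpleGraph.fromRel fun u v => u.val < s ∧ s ≤ v.val

/-!
Fix a bijection `π`. Of the `nk` pairs `(i, d)` with `1 ≤ d ≤ k`, at most `2sk` have `π i` or
`π (i + d)` in the part `A` of size `s`, so at least `k (n - 2s)` pairs have both ends in `B`.
As `2k < n` these pairs give distinct edges, none of them in `K_{s,t}`, so all of them must lie
in `X`, which happens with probability at most `p ^ (k (n - 2s))`. Sum over the `n!` bijections.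
-/

section BinomialWeight

variable {α : Type*} [DecidableEq α]

theorem sum_Icc_pow_mul_pow {R : Type*} [CommSemiring R] {S E : Finset α} (hSE : S ⊆ E)
    (a b : R) :
    ∑ ω ∈ Icc S E, a ^ #ω * b ^ (#E - #ω) = a ^ #S * (a + b) ^ (#E - #S) := by
  have hdisj : ∀ u ∈ (E \ S).powerset, Disjoint S u := fun u hu =>
    disjoint_of_subset_right (mem_powerset.1 hu) disjoint_sdiff
  have hinj : Set.InjOn (S ∪ ·) ((E \ S).powerset : Set (Finset α)) := by
    intro u hu v hv huv
    simpa [union_sdiff_cancel_left (hdisj u hu), union_sdiff_cancel_left (hdisj v hv)]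
      using congrArg (· \ S) huv
  rw [Icc_eq_image_powerset hSE, sum_image hinj, ← card_sdiff_of_subset hSE,
    ← sum_pow_mul_eq_add_pow, mul_sum]
  refine sum_congr rfl fun u hu => ?_
  rw [card_union_of_disjoint (hdisj u hu), pow_add, mul_assoc, card_sdiff_of_subset hSE,
    Nat.sub_add_eq]

/-- The left side is the expected number of `i` with `P ω i` for a `p`-random subset `ω` of `E`. -/
theorem sum_binomial_mul_card_le {ι : Type*} [Fintype ι] (E : Finset α)
    (P : Finset α → ι → Prop) (S : ι → Finset α) (hSE : ∀ i, S i ⊆ E)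
    (hPS : ∀ ω i, P ω i → S i ⊆ ω) {p : ℝ} (hp0 : 0 ≤ p) (hp1 : p ≤ 1) :
    ∑ ω ∈ E.powerset, p ^ #ω * (1 - p) ^ (#E - #ω) * (#{i | P ω i} : ℝ) ≤
      ∑ i, p ^ #(S i) := by
  have hw : ∀ ω : Finset α, 0 ≤ p ^ #ω * (1 - p) ^ (#E - #ω) := fun ω =>
    mul_nonneg (pow_nonneg hp0 _) (pow_nonneg (sub_nonneg.2 hp1) _)
  simp_rw [card_filter, Nat.cast_sum, mul_sum, Nat.cast_ite, Nat.cast_one, Nat.cast_zero,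
    mul_ite, mul_one, mul_zero]
  rw [sum_comm]
  refine sum_le_sum fun i _ => ?_
  calc ∑ ω ∈ E.powerset, (if P ω i then p ^ #ω * (1 - p) ^ (#E - #ω) else 0)
      = ∑ ω ∈ E.powerset with P ω i, p ^ #ω * (1 - p) ^ (#E - #ω) := (sum_filter _ _).symm
    _ ≤ ∑ ω ∈ Icc (S i) E, p ^ #ω * (1 - p) ^ (#E - #ω) := by
      refine sum_le_sum_of_subset_of_nonneg ?_ fun ω _ _ => hw ω
      rw [Icc_eq_filter_powerset]
      exact monotone_filter_right _ fun ω _ h => hPS ω i h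
    _ = p ^ #(S i) := by rw [sum_Icc_pow_mul_pow (hSE i), add_sub_cancel, one_pow, mul_one]

end BinomialWeight

section PowerOfCycle

variable {n k : ℕ}

def powCycleOffsets (n k : ℕ) : Finset (Fin n) :=
  univ.filter fun d : Fin n => 1 ≤ d.val ∧ d.val ≤ k

/-- The pair `(i, d)` with `d ∈ powCycleOffsets n k` indexes the edge `{i, i + d}` of the `k`th
power of the cycle on `Fin n`. -/
def powCycleIndex (n k : ℕ) : Finset (Fin n × Fin n) :=
  univ ×ˢ powCycleOffsets n k

def powCycleEdge (π : Equiv.Perm (Fin n)) (x : Fin n × Fin n) : Sym2 (Fin n) :=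
  s(π x.1, π (x.1 + x.2))

noncomputable def missingEdges (k : ℕ) (G : SimpleGraph (Fin n)) (π : Equiv.Perm (Fin n)) :
    Finset (Sym2 (Fin n)) :=
  {x ∈ powCycleIndex n k | ¬ G.Adj (π x.1) (π (x.1 + x.2))}.image (powCycleEdge π)

@[simp]
theorem mem_powCycleIndex {x : Fin n × Fin n} :
    x ∈ powCycleIndex n k ↔ 1 ≤ x.2.val ∧ x.2.val ≤ k := by
  simp [powCycleIndex, powCycleOffsets]

theorem card_powCycleOffsets (hk : k < n) : #(powCycleOffsets n k) = k := by
  have hval : (powCycleOffsets n k).map Fin.valEmbedding = Icc 1 k := by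
    ext m
    simp only [powCycleOffsets, mem_map, mem_filter, mem_univ, true_and,
      Fin.valEmbedding_apply, mem_Icc]
    exact ⟨fun ⟨d, hd, hdm⟩ => hdm ▸ hd, fun hm => ⟨⟨m, by omega⟩, hm, rfl⟩⟩
  rw [← card_map, hval, Nat.card_Icc, Nat.add_sub_cancel]

theorem card_powCycleIndex (hk : k < n) : #(powCycleIndex n k) = n * k := by
  rw [powCycleIndex, card_product, card_univ, Fintype.card_fin, card_powCycleOffsets hk]

theorem add_ne_self_of_mem_powCycleIndex {x : Fin n × Fin n} (hx : x ∈ powCycleIndex n k) :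
    x.1 + x.2 ≠ x.1 := by
  have : NeZero n := ⟨x.1.pos.ne'⟩
  rw [Ne, add_eq_left, Fin.ext_iff, Fin.val_zero]
  have := (mem_powCycleIndex.1 hx).1
  omega

/-- The pairs `(i, d)` and `(i + d, -d)` would give the same edge, but `-d` is not an offset
as long as `2k < n`. -/
theorem powCycleEdge_injOn (hn : 2 * k < n) (π : Equiv.Perm (Fin n)) :
    Set.InjOn (powCycleEdge π) (powCycleIndex n k : Set (Fin n × Fin n)) := by
  have : NeZero n := ⟨by omega⟩
  intro x hx y hy hxy
  have hx2 := mem_powCycleIndex.1 hx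
  have hy2 := mem_powCycleIndex.1 hy
  rcases Sym2.eq_iff.1 hxy with ⟨h1, h2⟩ | ⟨h1, h2⟩
  · have e1 : x.1 = y.1 := π.injective h1
    rw [e1] at h2
    exact Prod.ext e1 (add_left_cancel (π.injective h2))
  · have e1 : x.1 = y.1 + y.2 := π.injective h1
    have e2 : y.1 + (y.2 + x.2) = y.1 + 0 := by rw [add_zero, ← add_assoc, ← e1, π.injective h2]
    have hval := congrArg Fin.val (add_left_cancel e2)
    rw [Fin.val_add, Nat.mod_eq_of_lt (by omega), Fin.val_zero] at hval
    omega

theorem missingEdges_subset_completeEdges (G : SimpleGraph (Fin n)) (π : Equiv.Perm (Fin n)) :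
    missingEdges k G π ⊆ completeEdges n := by
  intro e he
  obtain ⟨x, hx, rfl⟩ := mem_image.1 he
  simp only [completeEdges, mem_filter, mem_univ, true_and, powCycleEdge,
    Sym2.mk_isDiag_iff, π.injective.eq_iff]
  exact (add_ne_self_of_mem_powCycleIndex (mem_filter.1 hx).1).symm

theorem IsPowHamCycle.missingEdges_subset {G : SimpleGraph (Fin n)} {π : Equiv.Perm (Fin n)}
    {ω : Finset (Sym2 (Fin n))} (h : IsPowHamCycle n k (G ⊔ SimpleGraph.fromEdgeSet ↑ω) π) :
    missingEdges k G π ⊆ ω := by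
  intro e he
  obtain ⟨x, hx, rfl⟩ := mem_image.1 he
  obtain ⟨hxI, hnotG⟩ := mem_filter.1 hx
  have hx2 := mem_powCycleIndex.1 hxI
  rcases (SimpleGraph.sup_adj _ _ _ _).1 (h x.1 x.2 hx2.1 hx2.2) with hG | hω
  · exact absurd hG hnotG
  · exact mod_cast (SimpleGraph.fromEdgeSet_adj _).1 hω |>.1

theorem card_powCycleIndex_filter_add_mem [NeZero n] (A : Finset (Fin n)) :
    #{x ∈ powCycleIndex n k | x.1 + x.2 ∈ A} = #{x ∈ powCycleIndex n k | x.1 ∈ A} := by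
  refine card_nbij' (fun x => (x.1 + x.2, x.2)) (fun x => (x.1 - x.2, x.2)) ?_ ?_ ?_ ?_ <;>
    intro x hx <;> simp_all [add_sub_cancel_right, sub_add_cancel]

/-- Every vertex of `A` is the first, and the second, endpoint of `k` index pairs. -/
theorem le_card_powCycleIndex_avoiding (hk : k < n) (A : Finset (Fin n)) :
    k * (n - 2 * #A) ≤ #{x ∈ powCycleIndex n k | x.1 ∉ A ∧ x.1 + x.2 ∉ A} := by
  have : NeZero n := ⟨by omega⟩
  set I := powCycleIndex n k
  have hfst : #{x ∈ I | x.1 ∈ A} = #A * k := by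
    rw [← card_powCycleOffsets hk, ← card_product]
    congr 1
    ext x
    simp [I, powCycleIndex, powCycleOffsets, and_comm]
  have htouch : #{x ∈ I | ¬(x.1 ∉ A ∧ x.1 + x.2 ∉ A)} ≤ #A * k + #A * k := by
    simp only [not_and_or, not_not]
    rw [filter_or]
    refine (card_union_le _ _).trans ?_
    rw [card_powCycleIndex_filter_add_mem, hfst]
  have hsplit := card_filter_add_card_filter_not (s := I) (fun x => x.1 ∉ A ∧ x.1 + x.2 ∉ A)
  rw [card_powCycleIndex hk] at hsplit
  rw [Nat.mul_sub, Nat.sub_le_iff_le_add]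
  linarith

theorem le_card_missingEdges_bipGraph (s : ℕ) (hn : 2 * k < n) (π : Equiv.Perm (Fin n)) :
    k * (n - 2 * s) ≤ #(missingEdges k (bipGraph n s) π) := by
  set A : Finset (Fin n) := {i | (π i).val < s}
  have hA : #A ≤ s := by
    rw [card_equiv π (s := A) (t := {v : Fin n | v.val < s}) (by simp [A]),
      Fin.card_filter_val_lt]
    exact min_le_right _ _
  have hmissing : ∀ x : Fin n × Fin n, x.1 ∉ A ∧ x.1 + x.2 ∉ A →
      ¬ (bipGraph n s).Adj (π x.1) (π (x.1 + x.2)) := by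
    simp only [A, mem_filter, mem_univ, true_and, bipGraph, SimpleGraph.fromRel_adj]
    omega
  rw [missingEdges, card_image_of_injOn ((powCycleEdge_injOn hn π).mono (coe_subset.2 (filter_subset _ _)))]
  calc k * (n - 2 * s) ≤ k * (n - 2 * #A) := Nat.mul_le_mul_left k (by omega)
    _ ≤ _ := le_card_powCycleIndex_avoiding (by omega) A
    _ ≤ _ := card_le_card (monotone_filter_right _ fun x _ => hmissing x)

end PowerOfCycle

theorem expected_powHam_bipartite_general (k n s : ℕ) (hn : 2 * k + 1 ≤ n)
    (p : ℝ) (hp0 : 0 ≤ p) (hp1 : p ≤ 1) :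
    (∑ ω ∈ (completeEdges n).powerset,
        (p ^ ω.card * (1 - p) ^ ((completeEdges n).card - ω.card)) *
          ((Finset.univ.filter fun π : Equiv.Perm (Fin n) =>
              IsPowHamCycle n k (bipGraph n s ⊔ SimpleGraph.fromEdgeSet (↑ω)) π).card : ℝ))
      ≤ (n.factorial : ℝ) * p ^ (k * (n - 2 * s)) := by
  calc _ ≤ ∑ π : Equiv.Perm (Fin n), p ^ #(missingEdges k (bipGraph n s) π) :=
        sum_binomial_mul_card_le _ _ _ (missingEdges_subset_completeEdges _)
          (fun _ _ h => h.missingEdges_subset) hp0 hp1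
    _ ≤ ∑ _π : Equiv.Perm (Fin n), p ^ (k * (n - 2 * s)) :=
        sum_le_sum fun π _ => pow_le_pow_of_le_one hp0 hp1 (le_card_missingEdges_bipGraph s hn π)
    _ = (n.factorial : ℝ) * p ^ (k * (n - 2 * s)) := by
        rw [sum_const, card_univ, Fintype.card_perm, Fintype.card_fin, nsmul_eq_mul]

/-- For `G = K_{s,t}` with `s + t = n` and `X` a binomial random graph `G(n, p)`, the
expected number of bijections `π` that are the `k`th power of a Hamilton cycle in `G + X`
is at most `n! · p^{k(n − 2s)}`. -/
theorem expected_powHam_bipartite (k n s t : ℕ) (hk : 1 ≤ k) (hn : 2 * k + 1 ≤ n)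
    (hst : s + t = n) (hs : 1 ≤ s) (ht : 1 ≤ t)
    (p : ℝ) (hp0 : 0 ≤ p) (hp1 : p ≤ 1) :
    (∑ ω ∈ (completeEdges n).powerset,
        (p ^ ω.card * (1 - p) ^ ((completeEdges n).card - ω.card)) *
          ((Finset.univ.filter fun π : Equiv.Perm (Fin n) =>
              IsPowHamCycle n k (bipGraph n s ⊔ SimpleGraph.fromEdgeSet (↑ω)) π).card : ℝ))
      ≤ (n.factorial : ℝ) * p ^ (k * (n - 2 * s)) :=
  expected_powHam_bipartite_general k n s hn p hp0 hp1
end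

section
/- Let k ≥ 1, let 0 < α < 1/2 and ε > 0 be constants, and for each n let s = ⌊αn⌋ and G = K_{s,n−s} be the complete bipartite graph on [n] with parts of sizes s and n − s. Let X be a binomial random graph G(n, p) with p = n^{−(1+ε)/(k(1−2α))}. Then with high probability the graph G + X contains no kth power of a Hamilton cycle. -/
open Finset
open scoped Classical

/-- The probability, under the binomial random graph `G(n, p)` (each possible edge present
independently with probability `p`), that the (random) edge set satisfies `Q`. -/
noncomputable def binomProb (n : ℕ) (p : ℝ) (Q : Finset (Sym2 (Fin n)) → Prop) : ℝ :=
  ∑ ω ∈ (completeEdges n).powerset,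
    if Q ω then p ^ ω.card * (1 - p) ^ ((completeEdges n).card - ω.card) else 0

/-!
Fix a `k`th power `π` of a Hamilton cycle in `K_{s,n-s} + X` and call `B = {v | s ≤ v}` the
large part. For each of the `k` offsets `d`, at least `n - 2s` of the cycle edges `π i π (i+d)`
have both ends in `B`; these `k (n - 2s)` edges are distinct (as `2k < n`) and, since `B` is
independent in `K_{s,n-s}`, they all lie in `X`. So each `π` survives with probability at most
`p ^ (k (n - 2s)) ≤ n ^ (-(1+ε) n)`, because `k (n - 2⌊αn⌋) ≥ k (1 - 2α) n`, and a union bound over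
the `n! ≤ n ^ n` bijections leaves `n ^ (-ε n) → 0`.
-/

lemma sum_powerset_pow_mul_one_sub_pow {ι : Type*} (E : Finset ι) (p : ℝ) :
    ∑ ω ∈ E.powerset, p ^ #ω * (1 - p) ^ (#E - #ω) = 1 := by
  simp [Finset.sum_pow_mul_eq_add_pow]

lemma sum_superset_pow_mul_one_sub_pow {ι : Type*} {E S : Finset ι} (hS : S ⊆ E) (p : ℝ) :
    ∑ ω ∈ E.powerset with S ⊆ ω, p ^ #ω * (1 - p) ^ (#E - #ω) = p ^ #S := by
  calc ∑ ω ∈ E.powerset with S ⊆ ω, p ^ #ω * (1 - p) ^ (#E - #ω)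
      = ∑ T ∈ (E \ S).powerset, p ^ #S * (p ^ #T * (1 - p) ^ (#(E \ S) - #T)) := by
        refine Finset.sum_nbij' (· \ S) (S ∪ ·) ?_ ?_ ?_ ?_ ?_
        · intro ω hω
          simp only [mem_filter, mem_powerset] at hω ⊢
          exact sdiff_subset_sdiff hω.1 le_rfl
        · intro T hT
          simp only [mem_filter, mem_powerset] at hT ⊢
          exact ⟨union_subset hS (hT.trans sdiff_subset), subset_union_left⟩
        · intro ω hω
          exact union_sdiff_of_subset (mem_filter.mp hω).2
        · intro T hT
          exact union_sdiff_cancel_left (disjoint_of_subset_right (mem_powerset.mp hT) disjoint_sdiff)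
        · intro ω hω
          obtain ⟨-, hSω⟩ := mem_filter.mp hω
          have hcard : #ω = #S + #(ω \ S) := by
            rw [card_sdiff_of_subset hSω, Nat.add_sub_cancel' (card_le_card hSω)]
          rw [card_sdiff_of_subset hS, hcard, pow_add, mul_assoc, Nat.sub_sub]
    _ = p ^ #S := by rw [← mul_sum, sum_powerset_pow_mul_one_sub_pow, mul_one]

section binomProb

variable {n : ℕ} {p : ℝ}

lemma binomProb_nonneg (hp0 : 0 ≤ p) (hp1 : p ≤ 1) (Q : Finset (Sym2 (Fin n)) → Prop) :
    0 ≤ binomProb n p Q :=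
  sum_nonneg fun _ _ => by split_ifs <;> positivity

lemma binomProb_not (Q : Finset (Sym2 (Fin n)) → Prop) :
    binomProb n p (fun ω => ¬ Q ω) = 1 - binomProb n p Q := by
  rw [eq_sub_iff_add_eq, binomProb, binomProb, ← sum_add_distrib]
  conv_rhs => rw [← sum_powerset_pow_mul_one_sub_pow (completeEdges n) p]
  exact sum_congr rfl fun ω _ => by by_cases h : Q ω <;> simp [h]

lemma binomProb_mono (hp0 : 0 ≤ p) (hp1 : p ≤ 1) {P Q : Finset (Sym2 (Fin n)) → Prop}
    (hPQ : ∀ ω, P ω → Q ω) : binomProb n p P ≤ binomProb n p Q :=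
  sum_le_sum fun ω _ => by
    by_cases h : P ω
    · simp [h, hPQ ω h]
    · rw [if_neg h]; split_ifs <;> positivity

lemma binomProb_superset {S : Finset (Sym2 (Fin n))} (hS : S ⊆ completeEdges n) :
    binomProb n p (S ⊆ ·) = p ^ #S := by
  rw [← sum_superset_pow_mul_one_sub_pow hS p, sum_filter, binomProb]
  exact sum_congr rfl fun _ _ => by split_ifs <;> rfl

lemma binomProb_exists_le_sum {ι : Type*} [Fintype ι] (hp0 : 0 ≤ p) (hp1 : p ≤ 1)
    (P : ι → Finset (Sym2 (Fin n)) → Prop) :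
    binomProb n p (fun ω => ∃ i, P i ω) ≤ ∑ i, binomProb n p (P i) := by
  unfold binomProb
  rw [sum_comm]
  refine sum_le_sum fun ω _ => ?_
  split_ifs with h
  · obtain ⟨i, hi⟩ := h
    calc _ = if P i ω then p ^ #ω * (1 - p) ^ (#(completeEdges n) - #ω) else 0 := (if_pos hi).symm
      _ ≤ _ := single_le_sum (f := fun j => if P j ω then _ else 0)
          (fun j _ => by split_ifs <;> positivity) (mem_univ i)
  · exact sum_nonneg fun j _ => by split_ifs <;> positivity

end binomProb

section forcedEdges

variable {n k s : ℕ}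

/-- The edges `π i π (i + d)`, `1 ≤ d ≤ k`, of a `k`th power of a Hamilton cycle whose ends both
lie in the part `{v | s ≤ v}` of `bipGraph n s`, indexed by the pairs `⟨d, i⟩`. -/
def forcedEdges (n k s : ℕ) (π : Equiv.Perm (Fin n)) : Finset (Sym2 (Fin n)) :=
  ((univ.filter fun d : Fin n => 1 ≤ d.val ∧ d.val ≤ k).sigma fun d =>
      univ.filter fun i => s ≤ (π i).val ∧ s ≤ (π (i + d)).val).image
    fun x => s(π x.2, π (x.2 + x.1))

lemma forcedEdges_subset_completeEdges (π : Equiv.Perm (Fin n)) :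
    forcedEdges n k s π ⊆ completeEdges n := by
  intro e he
  obtain ⟨⟨d, i⟩, hx, rfl⟩ := mem_image.mp he
  have : NeZero n := NeZero.of_pos d.pos
  have hd : d ≠ 0 := by
    rintro rfl
    simp at hx
  simpa [completeEdges] using hd

lemma forcedEdges_subset_of_isPowHamCycle {π : Equiv.Perm (Fin n)} {ω : Finset (Sym2 (Fin n))}
    (h : IsPowHamCycle n k (bipGraph n s ⊔ SimpleGraph.fromEdgeSet ↑ω) π) :
    forcedEdges n k s π ⊆ ω := by
  intro e he
  obtain ⟨⟨d, i⟩, hx, rfl⟩ := mem_image.mp he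
  simp only [mem_sigma, mem_filter, mem_univ, true_and] at hx
  have hnot : ¬ (bipGraph n s).Adj (π i) (π (i + d)) := by
    simp only [bipGraph, SimpleGraph.fromRel_adj]
    omega
  exact ((h i d hx.1.1 hx.1.2).resolve_left hnot).1

lemma card_filter_val_perm_lt_le (e : Equiv.Perm (Fin n)) (s : ℕ) :
    #{i | (e i).val < s} ≤ s := by
  rw [card_equiv e (t := {v | v.val < s}) (fun i => by simp), Fin.card_filter_val_lt]
  exact min_le_right n s

lemma sub_two_mul_le_card_filter (π : Equiv.Perm (Fin n)) (d : Fin n) :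
    n - 2 * s ≤ #{i | s ≤ (π i).val ∧ s ≤ (π (i + d)).val} := by
  have : NeZero n := NeZero.of_pos d.pos
  have hbad : #{i | ¬(s ≤ (π i).val ∧ s ≤ (π (i + d)).val)} ≤ 2 * s :=
    calc _ ≤ #(univ.filter (fun i => (π i).val < s) ∪
            univ.filter fun i => (π (i + d)).val < s) :=
          card_le_card fun i => by
            simp only [mem_filter, mem_union, mem_univ, true_and, not_and, not_le]
            omega
      _ ≤ s + s := (card_union_le _ _).trans
          (add_le_add (card_filter_val_perm_lt_le π s)
            (card_filter_val_perm_lt_le ((Equiv.addRight d).trans π) s))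
      _ = 2 * s := (two_mul s).symm
  have hsplit := card_filter_add_card_filter_not (s := univ)
    (fun i => s ≤ (π i).val ∧ s ≤ (π (i + d)).val)
  rw [card_univ, Fintype.card_fin] at hsplit
  omega

lemma card_filter_one_le_val_le (hk : k < n) : #{d : Fin n | 1 ≤ d.val ∧ d.val ≤ k} = k := by
  rw [card_nbij Fin.val (t := Icc 1 k) (fun d hd => by simpa using hd) Fin.val_injective.injOn
    (fun j hj => ⟨⟨j, by simp at hj; omega⟩, by simpa using hj, rfl⟩), Nat.card_Icc,
    Nat.add_sub_cancel]

lemma injOn_forcedEdge (h2k : 2 * k < n) (π : Equiv.Perm (Fin n)) :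
    Set.InjOn (fun x : (_ : Fin n) × Fin n => s(π x.2, π (x.2 + x.1)))
      {x | 1 ≤ x.1.val ∧ x.1.val ≤ k} := by
  have : NeZero n := NeZero.of_pos (by omega)
  rintro ⟨d, i⟩ ⟨hd1, hd2⟩ ⟨d', i'⟩ ⟨hd1', hd2'⟩ h
  rcases Sym2.eq_iff.mp h with ⟨hi, hid⟩ | ⟨hi, hid⟩
  · obtain rfl : i = i' := π.injective hi
    obtain rfl : d = d' := add_left_cancel (π.injective hid)
    rfl
  · -- `i = i' + d'` and `i + d = i'` force `d' + d = 0`, impossible for `2 ≤ d' + d ≤ 2k < n`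
    have hsum : d' + d = 0 := by
      have hi' : i' + (d' + d) = i' + 0 := by
        rw [add_zero, ← add_assoc, ← π.injective hi, π.injective hid]
      exact add_left_cancel hi'
    have := congrArg Fin.val hsum
    rw [Fin.val_add_eq_of_add_lt (by simp only at hd2 hd2'; omega), Fin.val_zero] at this
    simp only at hd1
    omega

lemma card_forcedEdges (h2k : 2 * k < n) (π : Equiv.Perm (Fin n)) :
    k * (n - 2 * s) ≤ #(forcedEdges n k s π) := by
  rw [forcedEdges, card_image_of_injOn, card_sigma]
  · calc k * (n - 2 * s) = #{d : Fin n | 1 ≤ d.val ∧ d.val ≤ k} • (n - 2 * s) := by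
          rw [card_filter_one_le_val_le (by omega), smul_eq_mul]
      _ ≤ _ := card_nsmul_le_sum _ _ _ fun d _ => sub_two_mul_le_card_filter π d
  · exact (injOn_forcedEdge h2k π).mono fun x hx => by simp_all

end forcedEdges

lemma binomProb_exists_isPowHamCycle_le {n k : ℕ} {p : ℝ} (hp0 : 0 ≤ p) (hp1 : p ≤ 1)
    (h2k : 2 * k < n) (s : ℕ) :
    binomProb n p (fun ω => ∃ π, IsPowHamCycle n k (bipGraph n s ⊔ SimpleGraph.fromEdgeSet ↑ω) π)
      ≤ (n.factorial : ℝ) * p ^ (k * (n - 2 * s)) :=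
  calc _ ≤ ∑ π, binomProb n p
          (fun ω => IsPowHamCycle n k (bipGraph n s ⊔ SimpleGraph.fromEdgeSet ↑ω) π) :=
        binomProb_exists_le_sum hp0 hp1 _
    _ ≤ ∑ _π : Equiv.Perm (Fin n), p ^ (k * (n - 2 * s)) := sum_le_sum fun π _ =>
        calc _ ≤ binomProb n p (forcedEdges n k s π ⊆ ·) :=
              binomProb_mono hp0 hp1 fun _ => forcedEdges_subset_of_isPowHamCycle
          _ = p ^ #(forcedEdges n k s π) := binomProb_superset (forcedEdges_subset_completeEdges π)
          _ ≤ _ := pow_le_pow_of_le_one hp0 hp1 (card_forcedEdges h2k π)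
    _ = (n.factorial : ℝ) * p ^ (k * (n - 2 * s)) := by simp [Fintype.card_perm]

lemma factorial_mul_rpow_neg_pow_le {n m : ℕ} {c ε : ℝ} (hn : 1 ≤ n) (hε : 0 ≤ ε)
    (hm : (1 + ε) * n ≤ c * m) : (n.factorial : ℝ) * ((n : ℝ) ^ (-c)) ^ m ≤ (n : ℝ) ^ (-ε) := by
  have hn1 : (1 : ℝ) ≤ n := by exact_mod_cast hn
  calc (n.factorial : ℝ) * ((n : ℝ) ^ (-c)) ^ m ≤ (n : ℝ) ^ n * ((n : ℝ) ^ (-c)) ^ m := by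
        gcongr
        exact_mod_cast Nat.factorial_le_pow n
    _ = (n : ℝ) ^ ((n : ℝ) + -c * m) := by
        rw [Real.rpow_add (by positivity), Real.rpow_natCast, ← Real.rpow_mul_natCast (by positivity)]
    _ ≤ (n : ℝ) ^ (-ε) := Real.rpow_le_rpow_of_exponent_le hn1 (by nlinarith)

lemma mul_one_sub_two_mul_le_mul_sub_two_mul_floor {α : ℝ} (hα : 0 ≤ α) (k n : ℕ) :
    k * (1 - 2 * α) * n ≤ ((k * (n - 2 * ⌊α * n⌋₊) : ℕ) : ℝ) := by
  have hfloor : (⌊α * n⌋₊ : ℝ) ≤ α * n := Nat.floor_le (by positivity)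
  calc (k : ℝ) * (1 - 2 * α) * n ≤ k * ((n : ℝ) - 2 * ⌊α * n⌋₊) := by
        rw [mul_assoc]; gcongr; linarith
    _ ≤ ((k * (n - 2 * ⌊α * n⌋₊) : ℕ) : ℝ) := by
        push_cast
        gcongr
        exact sub_le_iff_le_add.mpr (by exact_mod_cast le_tsub_add)

/-- For `k ≥ 1`, constants `0 < α < 1/2` and `ε > 0`, `s = ⌊αn⌋`, `G = K_{s, n−s}`, and
`X` a binomial random graph `G(n, p)` with `p = n^{−(1+ε)/(k(1−2α))}`, with high
probability `G + X` contains no `k`th power of a Hamilton cycle. -/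
theorem no_powHam_whp (k : ℕ) (hk : 1 ≤ k) (α ε : ℝ)
    (hα0 : 0 < α) (hα : α < 1 / 2) (hε : 0 < ε) :
    Filter.Tendsto
      (fun n : ℕ =>
        binomProb n ((n : ℝ) ^ (-(1 + ε) / (k * (1 - 2 * α))))
          (fun ω => ∀ π : Equiv.Perm (Fin n),
            ¬ IsPowHamCycle n k
                (bipGraph n ⌊α * n⌋₊ ⊔ SimpleGraph.fromEdgeSet (↑ω)) π))
      Filter.atTop (nhds 1) := by
  simp_rw [neg_div, ← not_exists, binomProb_not]
  set c := (1 + ε) / (k * (1 - 2 * α)) with hc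
  have hα2 : 1 - 2 * α ≠ 0 := by linarith
  have hkα : (0 : ℝ) < k * (1 - 2 * α) := mul_pos (by exact_mod_cast hk) (by linarith)
  have hc0 : 0 < c := div_pos (by linarith) hkα
  have hm (n : ℕ) : (1 + ε) * n ≤ c * (k * (n - 2 * ⌊α * n⌋₊) : ℕ) :=
    calc (1 + ε) * n = c * (k * (1 - 2 * α) * n) := by rw [hc]; field_simp
      _ ≤ _ := mul_le_mul_of_nonneg_left (mul_one_sub_two_mul_le_mul_sub_two_mul_floor hα0.le k n) hc0.le
  have hp (n : ℕ) (hn : 1 ≤ n) : 0 ≤ (n : ℝ) ^ (-c) ∧ (n : ℝ) ^ (-c) ≤ 1 :=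
    ⟨by positivity, Real.rpow_le_one_of_one_le_of_nonpos (by exact_mod_cast hn) (by linarith)⟩
  have hbound : ∀ᶠ n : ℕ in Filter.atTop, binomProb n ((n : ℝ) ^ (-c)) (fun ω => ∃ π,
      IsPowHamCycle n k (bipGraph n ⌊α * n⌋₊ ⊔ SimpleGraph.fromEdgeSet ↑ω) π) ≤ (n : ℝ) ^ (-ε) := by
    filter_upwards [Filter.eventually_gt_atTop (2 * k)] with n hn
    obtain ⟨hp0, hp1⟩ := hp n (by omega)
    exact (binomProb_exists_isPowHamCycle_le hp0 hp1 hn _).trans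
      (factorial_mul_rpow_neg_pow_le (by omega) hε.le (hm n))
  have hnonneg : ∀ᶠ n : ℕ in Filter.atTop, 0 ≤ binomProb n ((n : ℝ) ^ (-c)) (fun ω => ∃ π,
      IsPowHamCycle n k (bipGraph n ⌊α * n⌋₊ ⊔ SimpleGraph.fromEdgeSet ↑ω) π) := by
    filter_upwards [Filter.eventually_ge_atTop 1] with n hn
    exact binomProb_nonneg (hp n hn).1 (hp n hn).2 _
  simpa only [sub_zero] using (squeeze_zero' hnonneg hbound
    ((tendsto_rpow_neg_atTop hε).comp tendsto_natCast_atTop_atTop)).const_sub 1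
end
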